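/- arXiv:1608.06887 — 2 statements merged into one kernel-verified Lean document; each statement's English description precedes it below -/
import Mathlib

section
/- Worst-case braking connectivity: with one-dimensional kinematics Δp(t) = Δp(0) + Δv(0)t - α̅t² and Δv(t) = Δv(0) - 2α̅t (maximum deceleration α̅ > 0 applied to reduce separation rate), if Δp(0) ≤ D_c and Δv(0) ≤ 2√(α̅(D_c - Δp(0))), then Δp(t) ≤ D_c for all t ∈ [0, t*] where t* = max(0, Δv(0)/(2α̅)). -/
theorem braking_connectivity (ᾱ Dc p₀ v₀ : ℝ) (hα : 0 < ᾱ) (hDc : 0 < Dc)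
    (hp₀ : p₀ ≤ Dc) (hv₀ : v₀ ≤ 2 * Real.sqrt (ᾱ * (Dc - p₀))) :
    ∀ t ∈ Set.Icc (0 : ℝ) (max 0 (v₀ / (2 * ᾱ))),
      p₀ + v₀ * t - ᾱ * t ^ 2 ≤ Dc := by
  intro t ht
  obtain ⟨ht0, _⟩ := ht
  rcases le_or_gt v₀ 0 with hv | hv
  · nlinarith [mul_nonpos_of_nonpos_of_nonneg hv ht0, mul_nonneg hα.le (sq_nonneg t)]
  · have hx : 0 ≤ ᾱ * (Dc - p₀) := mul_nonneg hα.le (by linarith)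
    have hsq : v₀ ^ 2 ≤ 4 * (ᾱ * (Dc - p₀)) := by
      have h1 : v₀ ^ 2 ≤ (2 * Real.sqrt (ᾱ * (Dc - p₀))) ^ 2 :=
        pow_le_pow_left₀ hv.le hv₀ 2
      have h2 : Real.sqrt (ᾱ * (Dc - p₀)) ^ 2 = ᾱ * (Dc - p₀) := Real.sq_sqrt hx
      nlinarith
    nlinarith [sq_nonneg (v₀ - 2 * ᾱ * t), hα.le]
end

section
/- Chain rule for B-derivatives along a curve: if x : ℝ → ℝⁿ is differentiable at t and B : ℝⁿ → ℝ is Lipschitz and B-differentiable (has one-sided directional derivatives in all directions) at x(t), then the left time derivative of B ∘ x at t satisfies ∂₋(B∘x)(t) = -B'(x(t); -ẋ(t)), where B'(y; q) is the one-sided directional derivative of B at y in direction q. -/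
/-!
Near `x t` the function `B` is `K`-Lipschitz, so `B (x (t - h))` and `B (x t + h • (-v))` differ
by at most `K ‖x (t - h) - x t + h • v‖ = o(h)`. Hence the right slope of `h ↦ B (x (t - h))` at
`0` is the directional derivative `B' (-v)`, and reflecting `h = t - a` turns it into the left
slope of `B ∘ x` at `t`, with a sign change.
-/

open Filter Set Topology Asymptotics

section

variable {α E F : Type*} [NormedAddCommGroup E] [NormedAddCommGroup F]

theorem LipschitzOnWith.isBigO_comp_sub_comp {B : E → F} {K : NNReal} {s : Set E}
    (hB : LipschitzOnWith K B s) {l : Filter α} {f g : α → E}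
    (hf : ∀ᶠ a in l, f a ∈ s) (hg : ∀ᶠ a in l, g a ∈ s) :
    (fun a => B (f a) - B (g a)) =O[l] fun a => f a - g a :=
  IsBigO.of_bound K <| by
    filter_upwards [hf, hg] with a hfa hga
    simpa only [← dist_eq_norm] using hB.dist_le_mul _ hfa _ hga

variable [NormedSpace ℝ E] [NormedSpace ℝ F]

theorem LipschitzOnWith.tendsto_slope_comp_of_hasDerivWithinAt {B : E → F} {K : NNReal}
    {s : Set E} {γ : ℝ → E} {q : E} {L : F} (hB : LipschitzOnWith K B s) (hs : s ∈ 𝓝 (γ 0))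
    (hγ : HasDerivWithinAt γ q (Ioi 0) 0)
    (hL : Tendsto (fun h : ℝ => h⁻¹ • (B (γ 0 + h • q) - B (γ 0))) (𝓝[>] 0) (𝓝 L)) :
    Tendsto (fun h : ℝ => h⁻¹ • (B (γ h) - B (γ 0))) (𝓝[>] 0) (𝓝 L) := by
  have hγ_lim : Tendsto γ (𝓝[>] 0) (𝓝 (γ 0)) := hγ.continuousWithinAt
  have hline_lim : Tendsto (fun h : ℝ => γ 0 + h • q) (𝓝[>] 0) (𝓝 (γ 0)) := by
    have : Continuous fun h : ℝ => γ 0 + h • q := by fun_prop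
    simpa using this.continuousWithinAt (s := Ioi 0) (x := 0) |>.tendsto
  have htangent : (fun h => γ h - (γ 0 + h • q)) =o[𝓝[>] 0] fun h => h := by
    simpa only [sub_zero, sub_sub] using hγ.isLittleO
  have hgap : (fun h => B (γ h) - B (γ 0 + h • q)) =o[𝓝[>] 0] fun h => h :=
    (hB.isBigO_comp_sub_comp (hγ_lim.eventually_mem hs)
      (hline_lim.eventually_mem hs)).trans_isLittleO htangent
  simpa only [← smul_add, sub_add_sub_cancel, zero_add] using
    hgap.tendsto_inv_smul_nhds_zero.add hL

end

open Filter Set in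
theorem b_derivative_chain_rule {n : ℕ}
    (x : ℝ → EuclideanSpace ℝ (Fin n)) (t : ℝ) (v : EuclideanSpace ℝ (Fin n))
    (hx : HasDerivAt x v t)
    (B : EuclideanSpace ℝ (Fin n) → ℝ) (hB : LocallyLipschitz B)
    (B' : EuclideanSpace ℝ (Fin n) → ℝ)
    (hB' : ∀ q : EuclideanSpace ℝ (Fin n),
      Tendsto (fun a : ℝ => (B (x t + a • q) - B (x t)) / a)
        (nhdsWithin 0 (Ioi 0)) (nhds (B' q))) :
    Tendsto (fun a : ℝ => (B (x t) - B (x a)) / (t - a))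
      (nhdsWithin t (Iio t)) (nhds (-(B' (-v)))) := by
  obtain ⟨K, s, hs, hK⟩ := hB (x t)
  have hback : HasDerivAt (fun h => x (t - h)) (-v) 0 :=
    HasDerivAt.comp_const_sub t 0 (by simpa using hx)
  have hright : Tendsto (fun h : ℝ => (B (x (t - h)) - B (x t)) / h) (𝓝[>] 0) (𝓝 (B' (-v))) := by
    have := hK.tendsto_slope_comp_of_hasDerivWithinAt (by simpa using hs)
      hback.hasDerivWithinAt (by simpa [div_eq_inv_mul] using hB' (-v))
    simpa [div_eq_inv_mul] using this
  have hreflect : Tendsto (fun a : ℝ => t - a) (𝓝[<] t) (𝓝[>] 0) := by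
    have hcont : Continuous fun a : ℝ => t - a := by fun_prop
    simpa using (hcont.continuousWithinAt (s := Iio t) (x := t)).tendsto_nhdsWithin
      (t := Ioi 0) fun a ha => sub_pos.mpr ha
  refine (hright.neg.comp hreflect).congr fun a => ?_
  simp only [Function.comp_apply, sub_sub_cancel, ← neg_div, neg_sub]
end
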